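/- (Proposition 2.1, part on H, for κ ≤ 0) Let κ ≤ 0, let n ≥ 2 be an integer, and let F solve the ODE of the paper with F(0) = 0, F'(0) = 1. Define H(r) := F'(r)² + (n−1) F(r)²/sn_κ(r)². Then H is non-negative and non-increasing on (0,∞). -/

import Mathlib

open Set

/-- The comparison sine function `sn_κ` for `κ ≤ 0`: `sn_0(t) = t` and
`sn_κ(t) = sinh(√(-κ) t)/√(-κ)` for `κ < 0`. -/
noncomputable def snk (κ : ℝ) (t : ℝ) : ℝ :=
  if κ = 0 then t else Real.sinh (Real.sqrt (-κ) * t) / Real.sqrt (-κ)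

/-!
Along a solution of the ODE, `H' = -(2(n-1)/sn³)·(sn' (sn F')² - 2 (sn F') F + sn' F²)`, and the
quadratic form in brackets is `(sn' - 1)((sn F')² + F²) + (sn F' - F)² ≥ 0` because `sn_κ' ≥ 1`
when `κ ≤ 0`.
-/

section snk

variable {κ : ℝ}

lemma hasDerivAt_snk (hκ : κ ≤ 0) (r : ℝ) :
    HasDerivAt (snk κ) (if κ = 0 then 1 else Real.cosh (Real.sqrt (-κ) * r)) r := by
  by_cases h : κ = 0
  · have hid : snk κ = id := funext fun t => if_pos h
    rw [hid, if_pos h]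
    exact hasDerivAt_id r
  · have ha : Real.sqrt (-κ) ≠ 0 := (Real.sqrt_pos.2 (by grind)).ne'
    have hsinh : snk κ = fun t => Real.sinh (Real.sqrt (-κ) * t) / Real.sqrt (-κ) :=
      funext fun t => if_neg h
    have hlin : HasDerivAt (fun t => Real.sqrt (-κ) * t) (Real.sqrt (-κ)) r := by
      simpa using (hasDerivAt_id r).const_mul (Real.sqrt (-κ))
    rw [hsinh, if_neg h]
    have h := ((Real.hasDerivAt_sinh _).comp r hlin).div_const (Real.sqrt (-κ))
    rwa [mul_div_cancel_right₀ _ ha] at h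

lemma snk_pos (hκ : κ ≤ 0) {r : ℝ} (hr : 0 < r) : 0 < snk κ r := by
  by_cases h : κ = 0
  · simpa [snk, h] using hr
  · have ha : 0 < Real.sqrt (-κ) := Real.sqrt_pos.2 (by grind)
    have : 0 < Real.sinh (Real.sqrt (-κ) * r) := Real.sinh_pos_iff.2 (by positivity)
    simp only [snk, if_neg h]
    positivity

lemma one_le_deriv_snk (hκ : κ ≤ 0) (r : ℝ) : 1 ≤ deriv (snk κ) r := by
  rw [(hasDerivAt_snk hκ r).deriv]
  split_ifs
  · exact le_rfl
  · exact Real.one_le_cosh _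

end snk

lemma hasDerivAt_sq_add_mul_sq_div_sq {G F s : ℝ → ℝ} {G' F' s' r : ℝ} (c : ℝ)
    (hG : HasDerivAt G G' r) (hF : HasDerivAt F F' r) (hs : HasDerivAt s s' r) (hs0 : s r ≠ 0) :
    HasDerivAt (fun x => G x ^ 2 + c * F x ^ 2 / s x ^ 2)
      (2 * G r * G' + c * (2 * F r * F' / s r ^ 2 - 2 * F r ^ 2 * s' / s r ^ 3)) r := by
  have hquot := (hF.fun_pow 2).fun_div (hs.fun_pow 2) (pow_ne_zero 2 hs0)
  simp only [mul_div_assoc]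
  refine ((hG.fun_pow 2).fun_add (hquot.const_mul c)).congr_deriv ?_
  simp only [Nat.cast_ofNat, Nat.add_one_sub_one, pow_one]
  field_simp

noncomputable def energy (c : ℝ) (s F : ℝ → ℝ) (r : ℝ) : ℝ :=
  deriv F r ^ 2 + c * F r ^ 2 / s r ^ 2

lemma energy_deriv_nonpos {c s d f f' f'' : ℝ} (hc : 0 ≤ c) (hs : 0 < s) (hd : 1 ≤ d)
    (hode : f'' + c * (d / s) * f' - c / s ^ 2 * f = 0) :
    2 * f' * f'' + c * (2 * f * f' / s ^ 2 - 2 * f ^ 2 * d / s ^ 3) ≤ 0 := by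
  have hf'' : f'' = c / s ^ 2 * f - c * (d / s) * f' := by linear_combination hode
  have hform : 0 ≤ d * (s * f') ^ 2 - 2 * (s * f') * f + d * f ^ 2 := by
    nlinarith [sq_nonneg (s * f' - f), mul_nonneg (sub_nonneg.2 hd)
      (add_nonneg (sq_nonneg (s * f')) (sq_nonneg f))]
  calc 2 * f' * f'' + c * (2 * f * f' / s ^ 2 - 2 * f ^ 2 * d / s ^ 3)
      = -(2 * c / s ^ 3) * (d * (s * f') ^ 2 - 2 * (s * f') * f + d * f ^ 2) := by
        rw [hf'']
        field_simp
        ring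
    _ ≤ 0 := mul_nonpos_of_nonpos_of_nonneg (neg_nonpos.2 (by positivity)) hform

theorem antitoneOn_energy {c : ℝ} (hc : 0 ≤ c) {s F : ℝ → ℝ}
    (hs : ∀ r > 0, DifferentiableAt ℝ s r) (hs_pos : ∀ r > 0, 0 < s r)
    (hs' : ∀ r > 0, 1 ≤ deriv s r) (hF : ContDiffOn ℝ 2 F (Ioi 0))
    (hODE : ∀ r > 0, deriv (deriv F) r + c * (deriv s r / s r) * deriv F r
      - c / s r ^ 2 * F r = 0) :
    AntitoneOn (energy c s F) (Ioi 0) := by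
  have hF' : ContDiffOn ℝ 1 (deriv F) (Ioi 0) := hF.deriv_of_isOpen isOpen_Ioi (by norm_num)
  have hderiv : ∀ r ∈ Ioi (0 : ℝ), HasDerivAt (energy c s F)
      (2 * deriv F r * deriv (deriv F) r
        + c * (2 * F r * deriv F r / s r ^ 2 - 2 * F r ^ 2 * deriv s r / s r ^ 3)) r := by
    intro r hr
    have hnhds : Ioi (0 : ℝ) ∈ nhds r := isOpen_Ioi.mem_nhds hr
    exact hasDerivAt_sq_add_mul_sq_div_sq c
      ((hF'.differentiableOn one_ne_zero).differentiableAt hnhds).hasDerivAt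
      ((hF.differentiableOn two_ne_zero).differentiableAt hnhds).hasDerivAt
      (hs r hr).hasDerivAt (hs_pos r hr).ne'
  refine antitoneOn_of_hasDerivWithinAt_nonpos (convex_Ioi 0) (f' := fun r =>
      2 * deriv F r * deriv (deriv F) r
        + c * (2 * F r * deriv F r / s r ^ 2 - 2 * F r ^ 2 * deriv s r / s r ^ 3))
    (fun r hr => (hderiv r hr).continuousAt.continuousWithinAt) ?_ ?_
  · rw [interior_Ioi]
    exact fun r hr => (hderiv r hr).hasDerivWithinAt
  · rw [interior_Ioi]
    exact fun r hr => energy_deriv_nonpos hc (hs_pos r hr) (hs' r hr) (hODE r hr)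

theorem H_nonneg_antitone_general
    (κ : ℝ) (hκ : κ ≤ 0) (n : ℕ) (hn : 2 ≤ n) (F : ℝ → ℝ)
    (hF2 : ContDiffOn ℝ 2 F (Ioi 0))
    (hODE : ∀ r > 0, deriv (deriv F) r
      + ((n : ℝ) - 1) * (deriv (snk κ) r / snk κ r) * deriv F r
      - (((n : ℝ) - 1) / (snk κ r) ^ 2) * F r = 0)
    (H : ℝ → ℝ)
    (hH : ∀ r, H r = (deriv F r) ^ 2 + ((n : ℝ) - 1) * (F r) ^ 2 / (snk κ r) ^ 2) :
    (∀ r > 0, 0 ≤ H r) ∧ AntitoneOn H (Ioi 0) := by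
  have hc : (0 : ℝ) ≤ n - 1 := by
    have : (2 : ℝ) ≤ n := by exact_mod_cast hn
    linarith
  obtain rfl : H = energy ((n : ℝ) - 1) (snk κ) F := funext hH
  refine ⟨fun r _ => by unfold energy; positivity, ?_⟩
  exact antitoneOn_energy hc (fun r _ => (hasDerivAt_snk hκ r).differentiableAt)
    (fun r hr => snk_pos hκ hr) (fun r _ => one_le_deriv_snk hκ r) hF2 hODE

/-- Proposition 2.1 (part on `H`), for `κ ≤ 0`: the function
`H(r) = F'(r)² + (n-1) F(r)²/sn_κ(r)²` is non-negative and non-increasing on `(0,∞)`. -/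
theorem H_nonneg_antitone
    (κ : ℝ) (hκ : κ ≤ 0) (n : ℕ) (hn : 2 ≤ n) (F : ℝ → ℝ)
    (hFc : ContinuousOn F (Ici 0))
    (hF2 : ContDiffOn ℝ 2 F (Ioi 0))
    (hF0 : F 0 = 0)
    (hF'0 : HasDerivWithinAt F 1 (Ici 0) 0)
    (hODE : ∀ r > 0, deriv (deriv F) r
      + ((n : ℝ) - 1) * (deriv (snk κ) r / snk κ r) * deriv F r
      - (((n : ℝ) - 1) / (snk κ r) ^ 2) * F r = 0)
    (hFpos : ∀ r > 0, 0 < F r) (hF'pos : ∀ r > 0, 0 < deriv F r)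
    (H : ℝ → ℝ)
    (hH : ∀ r, H r = (deriv F r) ^ 2 + ((n : ℝ) - 1) * (F r) ^ 2 / (snk κ r) ^ 2) :
    (∀ r > 0, 0 ≤ H r) ∧ AntitoneOn H (Ioi 0) :=
  H_nonneg_antitone_general κ hκ n hn F hF2 hODE H hH
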